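/- arXiv:2206.05729 — 6 statements merged into one kernel-verified Lean document; each statement's English description precedes it below -/
import Mathlib

section
/- The number of monomials x0^{i}x1^{j}x2^{p}x3^{q} of total degree m-2 (m odd, m ≥ 3) whose weight i·a1 - j·a1 + p·a2 - q·a2 satisfies 0 < wt < a1 + a2 is (m-1)(m+1)/4, provided a1 > m·a2 > 0 and a1, a2 are odd. -/
/-- The triangle `{(a,b) : a + b ≤ k}` as a Finset. -/
def Tset (k : ℕ) : Finset (ℕ × ℕ) := (Finset.range (k+1)).biUnion Finset.HasAntidiagonal.antidiagonal

lemma mem_Tset {k : ℕ} {ab : ℕ × ℕ} : ab ∈ Tset k ↔ ab.1 + ab.2 ≤ k := by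
  simp only [Tset, Finset.mem_biUnion, Finset.mem_range, Finset.HasAntidiagonal.mem_antidiagonal]
  constructor
  · rintro ⟨n, hn, h⟩; omega
  · intro h; exact ⟨ab.1 + ab.2, by omega, rfl⟩

lemma sum_range_succ_eq (k : ℕ) : 2 * ∑ x ∈ Finset.range (k+1), (x+1) = (k+1) * (k+2) := by
  induction k with
  | zero => simp
  | succ n ih =>
    rw [Finset.sum_range_succ, Nat.mul_add, ih]
    ring

lemma two_mul_card_Tset (k : ℕ) : 2 * (Tset k).card = (k+1) * (k+2) := by
  rw [Tset, Finset.card_biUnion]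
  · rw [← sum_range_succ_eq k]
    congr 1
    apply Finset.sum_congr rfl
    intro n _
    exact Finset.Nat.card_antidiagonal n
  · intro x _ y _ hxy
    simp only [Finset.disjoint_left, Finset.HasAntidiagonal.mem_antidiagonal]
    intro a ha hb
    omega

def wtF0 (k : ℕ) (ab : ℕ × ℕ) : ℕ×ℕ×ℕ×ℕ := (ab.1, ab.1, 2*k+1 - 2*ab.1 - ab.2, ab.2)

def wtF1 (k : ℕ) (ab : ℕ × ℕ) : ℕ×ℕ×ℕ×ℕ := (ab.1+1, ab.1, ab.2, 2*k - 2*ab.1 - ab.2)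

lemma key (k : ℕ) (a1 a2 : ℤ) (ha2 : 0 < a2) (ha : (2*(k:ℤ)+3) * a2 < a1)
    (i j p q : ℕ) (hs : i + j + p + q = 2*k+1) :
    ((0:ℤ) < (i:ℤ)*a1 - (j:ℤ)*a1 + (p:ℤ)*a2 - (q:ℤ)*a2 ∧
      (i:ℤ)*a1 - (j:ℤ)*a1 + (p:ℤ)*a2 - (q:ℤ)*a2 < a1 + a2)
    ↔ ((i = j ∧ q < p) ∨ (i = j + 1 ∧ p ≤ q)) := by
  have ha1 : 0 < a1 := lt_trans (by positivity) ha
  have hsZ : (i:ℤ) + (j:ℤ) + (p:ℤ) + (q:ℤ) = 2*(k:ℤ)+1 := by exact_mod_cast hs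
  have hp0 : (0:ℤ) ≤ p := Int.natCast_nonneg p
  have hq0 : (0:ℤ) ≤ q := Int.natCast_nonneg q
  have hi0 : (0:ℤ) ≤ i := Int.natCast_nonneg i
  have hj0 : (0:ℤ) ≤ j := Int.natCast_nonneg j
  have hpq1 : ((p:ℤ) - q) * a2 ≤ (2*(k:ℤ)+1) * a2 := by
    apply mul_le_mul_of_nonneg_right _ ha2.le; linarith
  have hpq2 : -((2*(k:ℤ)+1) * a2) ≤ ((p:ℤ) - q) * a2 := by
    rw [← neg_mul]
    apply mul_le_mul_of_nonneg_right _ ha2.le; linarith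
  constructor
  · rintro ⟨hw1, hw2⟩
    rcases Nat.lt_trichotomy i j with h | h | h
    · exfalso
      have hd : (i:ℤ) - j ≤ -1 := by omega
      have hm1 : ((i:ℤ) - j) * a1 ≤ -1 * a1 := mul_le_mul_of_nonneg_right hd ha1.le
      nlinarith
    · left
      refine ⟨h, ?_⟩
      have hia : (i:ℤ) * a1 = (j:ℤ) * a1 := by rw [h]
      have hpos : 0 < ((p:ℤ) - q) * a2 := by nlinarith
      have : (q:ℤ) < p := by
        by_contra hc
        push_neg at hc
        have : ((p:ℤ) - q) * a2 ≤ 0 := mul_nonpos_of_nonpos_of_nonneg (by linarith) ha2.le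
        linarith
      exact_mod_cast this
    · by_cases h' : i = j + 1
      · right
        refine ⟨h', ?_⟩
        have hia : (i:ℤ) * a1 = (j:ℤ) * a1 + a1 := by
          have : (i:ℤ) = (j:ℤ) + 1 := by omega
          rw [this]; ring
        have hlt : ((p:ℤ) - q) * a2 < a2 := by nlinarith
        have : (p:ℤ) - q < 1 := by
          by_contra hc
          push_neg at hc
          nlinarith
        omega
      · exfalso
        have hd : (2:ℤ) ≤ (i:ℤ) - j := by omega
        have hm1 : 2 * a1 ≤ ((i:ℤ) - j) * a1 := by nlinarith
        nlinarith
  · rintro (⟨hij, hqp⟩ | ⟨hij, hpq⟩)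
    · have hia : (i:ℤ) * a1 = (j:ℤ) * a1 := by rw [hij]
      have h1 : (1:ℤ) ≤ (p:ℤ) - q := by omega
      have hge : 1 * a2 ≤ ((p:ℤ) - q) * a2 := mul_le_mul_of_nonneg_right h1 ha2.le
      constructor
      · linarith [hge, hia]
      · linarith [hpq1, hia]
    · have hia : (i:ℤ) * a1 = (j:ℤ) * a1 + a1 := by
        have : (i:ℤ) = (j:ℤ) + 1 := by omega
        rw [this]; ring
      have hd : (p:ℤ) - q ≤ 0 := by omega
      have hle : ((p:ℤ) - q) * a2 ≤ 0 := mul_nonpos_of_nonpos_of_nonneg hd ha2.le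
      constructor
      · linarith [hpq2, hia]
      · linarith [hle, hia]

/-- Counting monomials `x0^i x1^j x2^p x3^q` of total degree m - 2 with weight
`(i-j)·a1 + (p-q)·a2` strictly between 0 and a1 + a2. -/
theorem stmt_3 (m : ℕ) (hm : Odd m) (hm3 : 3 ≤ m) (a1 a2 : ℤ)
    (h1 : Odd a1) (h2 : Odd a2) (ha2 : 0 < a2) (ha : (m : ℤ) * a2 < a1) :
    Set.ncard {v : ℕ × ℕ × ℕ × ℕ |
        v.1 + v.2.1 + v.2.2.1 + v.2.2.2 = m - 2 ∧
        (0 : ℤ) < (v.1 : ℤ) * a1 - (v.2.1 : ℤ) * a1 + (v.2.2.1 : ℤ) * a2 - (v.2.2.2 : ℤ) * a2 ∧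
        (v.1 : ℤ) * a1 - (v.2.1 : ℤ) * a1 + (v.2.2.1 : ℤ) * a2 - (v.2.2.2 : ℤ) * a2 < a1 + a2}
      = (m - 1) * (m + 1) / 4 := by
  obtain ⟨k, rfl⟩ : ∃ k, m = 2*k+3 := by
    obtain ⟨t, ht⟩ := hm
    exact ⟨t-1, by omega⟩
  have ha' : (2*(k:ℤ)+3) * a2 < a1 := by
    have : ((2*k+3 : ℕ) : ℤ) = 2*(k:ℤ)+3 := by push_cast; ring
    rw [← this]; exact ha
  have hinj0 : Function.Injective (wtF0 k) := by
    intro a b h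
    simp only [wtF0, Prod.mk.injEq] at h
    exact Prod.ext h.1 h.2.2.2
  have hinj1 : Function.Injective (wtF1 k) := by
    intro a b h
    simp only [wtF1, Prod.mk.injEq] at h
    exact Prod.ext h.2.1 h.2.2.1
  have hset : {v : ℕ × ℕ × ℕ × ℕ |
        v.1 + v.2.1 + v.2.2.1 + v.2.2.2 = 2*k+3 - 2 ∧
        (0 : ℤ) < (v.1 : ℤ) * a1 - (v.2.1 : ℤ) * a1 + (v.2.2.1 : ℤ) * a2 - (v.2.2.2 : ℤ) * a2 ∧
        (v.1 : ℤ) * a1 - (v.2.1 : ℤ) * a1 + (v.2.2.1 : ℤ) * a2 - (v.2.2.2 : ℤ) * a2 < a1 + a2}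
      = ↑((Tset k).image (wtF0 k) ∪ (Tset k).image (wtF1 k)) := by
    ext ⟨i, j, p, q⟩
    simp only [Set.mem_setOf_eq, Finset.coe_union, Set.mem_union, Finset.mem_coe,
      Finset.mem_image]
    constructor
    · rintro ⟨hs, hw1, hw2⟩
      have hs' : i + j + p + q = 2*k+1 := by omega
      have hcomb := (key k a1 a2 ha2 ha' i j p q hs').mp ⟨hw1, hw2⟩
      rcases hcomb with ⟨hij, hqp⟩ | ⟨hij, hpq⟩
      · left
        refine ⟨(i, q), mem_Tset.mpr (by simp; omega), ?_⟩
        simp only [wtF0, Prod.mk.injEq]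
        refine ⟨trivial, by omega, by omega, trivial⟩
      · right
        refine ⟨(j, p), mem_Tset.mpr (by simp; omega), ?_⟩
        simp only [wtF1, Prod.mk.injEq]
        refine ⟨by omega, trivial, trivial, by omega⟩
    · rintro (⟨⟨a, b⟩, hab, heq⟩ | ⟨⟨a, b⟩, hab, heq⟩)
      · rw [mem_Tset] at hab
        simp only at hab
        simp only [wtF0, Prod.mk.injEq] at heq
        obtain ⟨e1, e2, e3, e4⟩ := heq
        have hs' : i + j + p + q = 2*k+1 := by omega
        refine ⟨by omega, (key k a1 a2 ha2 ha' i j p q hs').mpr (Or.inl ⟨by omega, by omega⟩)⟩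
      · rw [mem_Tset] at hab
        simp only at hab
        simp only [wtF1, Prod.mk.injEq] at heq
        obtain ⟨e1, e2, e3, e4⟩ := heq
        have hs' : i + j + p + q = 2*k+1 := by omega
        refine ⟨by omega, (key k a1 a2 ha2 ha' i j p q hs').mpr (Or.inr ⟨by omega, by omega⟩)⟩
  rw [hset, Set.ncard_coe_finset]
  have hdisj : Disjoint ((Tset k).image (wtF0 k)) ((Tset k).image (wtF1 k)) := by
    rw [Finset.disjoint_left]
    rintro v hv0 hv1
    simp only [Finset.mem_image, wtF0, wtF1] at hv0 hv1
    obtain ⟨⟨a, b⟩, _, rfl⟩ := hv0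
    obtain ⟨⟨c, d⟩, _, he⟩ := hv1
    simp only [Prod.mk.injEq] at he
    omega
  rw [Finset.card_union_of_disjoint hdisj, Finset.card_image_of_injective _ hinj0,
    Finset.card_image_of_injective _ hinj1]
  have h2T := two_mul_card_Tset k
  have e1 : 2*k+3-1 = 2*(k+1) := by omega
  have e2 : 2*k+3+1 = 2*(k+2) := by omega
  rw [e1, e2]
  have e3 : 2*(k+1) * (2*(k+2)) = 4 * ((k+1)*(k+2)) := by ring
  rw [e3, Nat.mul_div_cancel_left _ (by norm_num)]
  omega
end

section
/- The number of monomials of degree m-2 in x0,x1,x2,x3 (m odd, m ≥ 3) with weight strictly between 0 and a1 - a2 equals (m-1)^2/4, where weights are a1, -a1, a2, -a2 respectively and a1 > m·a2 > 0 are odd. -/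
set_option maxHeartbeats 1000000 in
/-- Counting monomials `x0^i x1^j x2^p x3^q` of total degree m - 2 with weight
`(i-j)·a1 + (p-q)·a2` strictly between 0 and a1 - a2. -/
theorem stmt_4 (m : ℕ) (hm : Odd m) (hm3 : 3 ≤ m) (a1 a2 : ℤ)
    (h1 : Odd a1) (h2 : Odd a2) (ha2 : 0 < a2) (ha : (m : ℤ) * a2 < a1) :
    Set.ncard {v : ℕ × ℕ × ℕ × ℕ |
        v.1 + v.2.1 + v.2.2.1 + v.2.2.2 = m - 2 ∧
        (0 : ℤ) < (v.1 : ℤ) * a1 - (v.2.1 : ℤ) * a1 + (v.2.2.1 : ℤ) * a2 - (v.2.2.2 : ℤ) * a2 ∧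
        (v.1 : ℤ) * a1 - (v.2.1 : ℤ) * a1 + (v.2.2.1 : ℤ) * a2 - (v.2.2.2 : ℤ) * a2 < a1 - a2}
      = (m - 1) ^ 2 / 4 := by
  obtain ⟨n, rfl⟩ : ∃ n, m = 2 * n + 3 := by
    obtain ⟨k, hk⟩ := hm; exact ⟨(m - 3) / 2, by omega⟩
  have hmn : ((2 * n + 3 : ℕ) : ℤ) = 2 * (n : ℤ) + 3 := by push_cast; ring
  rw [hmn] at ha
  have ha1 : (0 : ℤ) < a1 := by nlinarith
  set f : ℕ × ℕ → ℕ × ℕ × ℕ × ℕ := fun ab =>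
    if ab.1 + ab.2 ≤ n then (ab.1, ab.1, 2 * n + 1 - 2 * ab.1 - ab.2, ab.2)
    else (n - ab.1 + 1, n - ab.1, n - ab.2, 2 * ab.1 + ab.2 - n) with hf
  have key : {v : ℕ × ℕ × ℕ × ℕ |
        v.1 + v.2.1 + v.2.2.1 + v.2.2.2 = 2 * n + 3 - 2 ∧
        (0 : ℤ) < (v.1 : ℤ) * a1 - (v.2.1 : ℤ) * a1 + (v.2.2.1 : ℤ) * a2 - (v.2.2.2 : ℤ) * a2 ∧
        (v.1 : ℤ) * a1 - (v.2.1 : ℤ) * a1 + (v.2.2.1 : ℤ) * a2 - (v.2.2.2 : ℤ) * a2 < a1 - a2} =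
      ↑(((Finset.range (n + 1)) ×ˢ (Finset.range (n + 1))).image f) := by
    ext ⟨i, j, p, q⟩
    simp only [Set.mem_setOf_eq, Finset.coe_image, Set.mem_image, Finset.mem_coe,
      Finset.mem_product, Finset.mem_range, Prod.exists]
    constructor
    · rintro ⟨hsum, hpos, hlt⟩
      -- first show j ≤ i ≤ j + 1
      have hq : (q : ℤ) ≤ 2 * n + 1 := by omega
      have hp : (p : ℤ) ≤ 2 * n + 1 := by omega
      have hij1 : j ≤ i := by
        by_contra h
        push_neg at h
        have h' : (i : ℤ) + 1 ≤ j := by exact_mod_cast h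
        have hn1 : (0 : ℤ) ≤ (j : ℤ) - i - 1 := by linarith
        nlinarith [mul_nonneg hn1 ha1.le, mul_nonneg (by positivity : (0:ℤ) ≤ (q:ℤ)) ha2.le,
          mul_nonneg (by positivity : (0:ℤ) ≤ (p:ℤ)) ha2.le]
      have hij2 : i ≤ j + 1 := by
        by_contra h
        push_neg at h
        have h' : (j : ℤ) + 2 ≤ i := by exact_mod_cast h
        have hn1 : (0 : ℤ) ≤ (i : ℤ) - j - 2 := by linarith
        nlinarith [mul_nonneg hn1 ha1.le, mul_nonneg (by positivity : (0:ℤ) ≤ (q:ℤ)) ha2.le,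
          mul_nonneg (by positivity : (0:ℤ) ≤ (p:ℤ)) ha2.le]
      rcases Nat.eq_or_lt_of_le hij1 with hji | hji
      · -- case i = j : weight = (p - q) * a2 > 0 hence q < p
        have hji' : (i : ℤ) = j := by omega
        have hqp : q < p := by
          by_contra h
          push_neg at h
          have h' : (p : ℤ) ≤ q := by omega
          nlinarith [mul_nonneg (by linarith : (0:ℤ) ≤ (q:ℤ) - p) ha2.le]
        refine ⟨i, q, ⟨by omega, by omega⟩, ?_⟩
        have hc : i + q ≤ n := by omega
        simp only [hf, if_pos hc, Prod.mk.injEq, true_and, and_true]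
        omega
      · -- case i = j + 1 : weight = a1 + (p - q) * a2 < a1 - a2 hence p + 2 ≤ q
        have hij : i = j + 1 := by omega
        have hji' : (i : ℤ) = (j : ℤ) + 1 := by omega
        have hqp : p + 2 ≤ q := by
          by_contra h
          push_neg at h
          have h' : (q : ℤ) ≤ p + 1 := by omega
          nlinarith [mul_nonneg (by linarith : (0:ℤ) ≤ (p:ℤ) + 1 - q) ha2.le]
        refine ⟨n - j, n - p, ⟨by omega, by omega⟩, ?_⟩
        have hc : ¬ (n - j + (n - p) ≤ n) := by omega
        simp only [hf, if_neg hc, Prod.mk.injEq, true_and, and_true]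
        omega
    · rintro ⟨a, b, ⟨ha', hb'⟩, heq⟩
      by_cases hab : a + b ≤ n
      · simp only [hf, if_pos hab, Prod.mk.injEq] at heq
        obtain ⟨rfl, rfl, rfl, rfl⟩ := heq
        refine ⟨by omega, ?_, ?_⟩
        · have hc : ((2 * n + 1 - 2 * a - b : ℕ) : ℤ) = 2 * n + 1 - 2 * a - b := by omega
          rw [hc]
          have h1 : (1 : ℤ) ≤ 2 * n + 1 - 2 * a - 2 * b := by omega
          nlinarith [mul_nonneg (by linarith : (0:ℤ) ≤ 2 * (n:ℤ) - 2 * a - 2 * b) ha2.le]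
        · have hc : ((2 * n + 1 - 2 * a - b : ℕ) : ℤ) = 2 * n + 1 - 2 * a - b := by omega
          rw [hc]
          nlinarith [mul_nonneg (by positivity : (0:ℤ) ≤ 2 * (a:ℤ) + 2 * b) ha2.le]
      · simp only [hf, if_neg hab, Prod.mk.injEq] at heq
        obtain ⟨rfl, rfl, rfl, rfl⟩ := heq
        push_neg at hab
        refine ⟨by omega, ?_, ?_⟩
        · have hc1 : ((n - a + 1 : ℕ) : ℤ) = n - a + 1 := by omega
          have hc2 : ((n - a : ℕ) : ℤ) = n - a := by omega
          have hc3 : ((n - b : ℕ) : ℤ) = n - b := by omega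
          have hc4 : ((2 * a + b - n : ℕ) : ℤ) = 2 * a + b - n := by omega
          rw [hc1, hc2, hc3, hc4]
          have h1 : (a : ℤ) + b - n ≤ n := by omega
          nlinarith [mul_nonneg (by linarith : (0:ℤ) ≤ 2 * (n:ℤ) - ((a:ℤ) + b - n) * 2) ha2.le]
        · have hc1 : ((n - a + 1 : ℕ) : ℤ) = n - a + 1 := by omega
          have hc2 : ((n - a : ℕ) : ℤ) = n - a := by omega
          have hc3 : ((n - b : ℕ) : ℤ) = n - b := by omega
          have hc4 : ((2 * a + b - n : ℕ) : ℤ) = 2 * a + b - n := by omega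
          rw [hc1, hc2, hc3, hc4]
          have h1 : (1 : ℤ) ≤ (a : ℤ) + b - n := by omega
          nlinarith [mul_nonneg (by linarith : (0:ℤ) ≤ ((a:ℤ) + b - n) * 2 - 2) ha2.le]
  rw [key, Set.ncard_coe_finset]
  have hinj : Set.InjOn f (((Finset.range (n + 1)) ×ˢ (Finset.range (n + 1)) : Finset (ℕ × ℕ)) : Set (ℕ × ℕ)) := by
    rintro ⟨a, b⟩ hab ⟨a', b'⟩ hab' heq
    simp only [Finset.mem_coe, Finset.mem_product, Finset.mem_range] at hab hab'
    simp only [hf] at heq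
    split_ifs at heq <;>
    · simp only [Prod.mk.injEq] at heq
      obtain ⟨e1, e2, e3, e4⟩ := heq
      obtain rfl : a = a' := by omega
      obtain rfl : b = b' := by omega
      rfl
  rw [Finset.card_image_of_injOn hinj, Finset.card_product, Finset.card_range]
  have h4 : 2 * n + 3 - 1 = 2 * (n + 1) := by omega
  rw [h4]
  have h5 : (2 * (n + 1)) ^ 2 = 4 * ((n + 1) * (n + 1)) := by ring
  rw [h5, Nat.mul_div_cancel_left _ (by norm_num)]
end

section
/- The number of monomials of degree m-2 in x0,x1,x2,x3 (m odd, m ≥ 3) with weight strictly between 0 and 2·a2 equals (m-1)/2, where weights are a1, -a1, a2, -a2 and a1 > m·a2 > 0 are odd integers. -/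
/-- Counting monomials `x0^i x1^j x2^p x3^q` of total degree m - 2 with weight
`(i-j)·a1 + (p-q)·a2` strictly between 0 and 2 * a2. -/
theorem stmt_5 (m : ℕ) (hm : Odd m) (hm3 : 3 ≤ m) (a1 a2 : ℤ)
    (h1 : Odd a1) (h2 : Odd a2) (ha2 : 0 < a2) (ha : (m : ℤ) * a2 < a1) :
    Set.ncard {v : ℕ × ℕ × ℕ × ℕ |
        v.1 + v.2.1 + v.2.2.1 + v.2.2.2 = m - 2 ∧
        (0 : ℤ) < (v.1 : ℤ) * a1 - (v.2.1 : ℤ) * a1 + (v.2.2.1 : ℤ) * a2 - (v.2.2.2 : ℤ) * a2 ∧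
        (v.1 : ℤ) * a1 - (v.2.1 : ℤ) * a1 + (v.2.2.1 : ℤ) * a2 - (v.2.2.2 : ℤ) * a2 < 2 * a2}
      = (m - 1) / 2 := by
  obtain ⟨k, hk⟩ := hm
  have hk1 : 1 ≤ k := by omega
  have hmz : (m : ℤ) = 2 * k + 1 := by exact_mod_cast congrArg Nat.cast hk
  have hS : {v : ℕ × ℕ × ℕ × ℕ |
        v.1 + v.2.1 + v.2.2.1 + v.2.2.2 = m - 2 ∧
        (0 : ℤ) < (v.1 : ℤ) * a1 - (v.2.1 : ℤ) * a1 + (v.2.2.1 : ℤ) * a2 - (v.2.2.2 : ℤ) * a2 ∧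
        (v.1 : ℤ) * a1 - (v.2.1 : ℤ) * a1 + (v.2.2.1 : ℤ) * a2 - (v.2.2.2 : ℤ) * a2 < 2 * a2}
      = ↑((Finset.range k).image (fun i => (i, i, k - i, k - 1 - i))) := by
    ext ⟨i, j, p, q⟩
    simp only [Set.mem_setOf_eq, Finset.coe_image, Set.mem_image, Finset.mem_coe,
      Finset.mem_range]
    constructor
    · rintro ⟨hsum, hw1, hw2⟩
      have hsum' : i + j + p + q + 1 = 2 * k := by omega
      have hsz : (i : ℤ) + j + p + q + 1 = 2 * k := by exact_mod_cast congrArg Nat.cast hsum'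
      have hiN : (0:ℤ) ≤ (i:ℤ) := Int.ofNat_nonneg i
      have hjN : (0:ℤ) ≤ (j:ℤ) := Int.ofNat_nonneg j
      have hpN : (0:ℤ) ≤ (p:ℤ) := Int.ofNat_nonneg p
      have hqN : (0:ℤ) ≤ (q:ℤ) := Int.ofNat_nonneg q
      have hmpos : (0:ℤ) < (m:ℤ) := by rw [hmz]; positivity
      have ha1 : (0:ℤ) < a1 := by nlinarith
      have hij : i = j := by
        by_contra hne
        rcases Nat.lt_or_ge i j with h | h
        · have hji : (i:ℤ) + 1 ≤ (j:ℤ) := by exact_mod_cast h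
          nlinarith [mul_nonneg (by linarith : (0:ℤ) ≤ (j:ℤ) - i - 1)
              (le_of_lt ha1),
            mul_nonneg (by linarith : (0:ℤ) ≤ (2*(k:ℤ) - 1) - ((p:ℤ) - q)) (le_of_lt ha2)]
        · have hij' : (j:ℤ) + 1 ≤ (i:ℤ) := by
            have : j < i := lt_of_le_of_ne h (fun hh => hne hh.symm)
            exact_mod_cast this
          nlinarith [mul_nonneg (by linarith : (0:ℤ) ≤ (i:ℤ) - j - 1)
              (le_of_lt ha1),
            mul_nonneg (by linarith : (0:ℤ) ≤ ((p:ℤ) - q) + (2*(k:ℤ) - 1)) (le_of_lt ha2)]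
      subst hij
      have hpq1 : (0:ℤ) < (p:ℤ) - q := by nlinarith
      have hpq2 : (p:ℤ) - q < 2 := by nlinarith
      have hq : q < p := by exact_mod_cast (by linarith : (q:ℤ) < p)
      have hp : p < q + 2 := by exact_mod_cast (by linarith : (p:ℤ) < (q:ℤ) + 2)
      refine ⟨i, by omega, ?_⟩
      have hpk : p = k - i := by omega
      have hqk : q = k - 1 - i := by omega
      simp [hpk, hqk]
    · rintro ⟨i, hi, heq⟩
      obtain ⟨rfl, rfl, rfl, rfl⟩ := heq
      have hc1 : ((k - i : ℕ) : ℤ) = (k:ℤ) - i := by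
        rw [Nat.cast_sub (by omega)]
      have hc2 : ((k - 1 - i : ℕ) : ℤ) = (k:ℤ) - 1 - i := by
        rw [Nat.cast_sub (by omega), Nat.cast_sub (by omega)]; push_cast; ring
      refine ⟨by omega, ?_, ?_⟩
      · rw [hc1, hc2]; ring_nf; linarith
      · rw [hc1, hc2]; ring_nf; linarith
  rw [hS, Set.ncard_coe_finset,
    Finset.card_image_of_injective _ (fun a b h => (Prod.ext_iff.mp h).1),
    Finset.card_range]
  omega
end

section
/- The number of monomials of degree m-2 in x0,x1,x2,x3 (m odd, m ≥ 3) with weight strictly between 0 and 2·a1 equals (m-1)^2/2, where weights are a1, -a1, a2, -a2 and a1 > m·a2 > 0 are odd integers. -/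
set_option maxHeartbeats 1000000

open Finset

private lemma sum_odds_aux (n : ℕ) : ∑ j ∈ range n, (2*j+1) = n^2 := by
  induction n with
  | zero => simp
  | succ n ih => rw [sum_range_succ, ih]; ring

private lemma cardlem (n B : ℕ) (f : ℕ → ℕ) (hf : ∀ a, a < n → f a ≤ B) :
    ((range n ×ˢ range B).filter (fun p : ℕ × ℕ => p.2 < f p.1)).card
      = ∑ a ∈ range n, f a := by
  have hset : ((range n ×ˢ range B).filter (fun p : ℕ × ℕ => p.2 < f p.1))
      = (range n).biUnion (fun a => (range (f a)).image (fun b => (a, b))) := by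
    ext ⟨a, b⟩
    simp only [mem_filter, mem_product, mem_range, mem_biUnion, mem_image, Prod.mk.injEq]
    constructor
    · rintro ⟨⟨ha, hb⟩, h⟩; exact ⟨a, ha, b, h, rfl, rfl⟩
    · rintro ⟨a', ha', b', hb', rfl, rfl⟩
      exact ⟨⟨ha', lt_of_lt_of_le hb' (hf a' ha')⟩, hb'⟩
  rw [hset, card_biUnion]
  · apply sum_congr rfl
    intro a _
    rw [card_image_of_injective _ (fun x y h => ((Prod.mk.injEq _ _ _ _).mp h).2), card_range]
  · intro x _ y _ hxy
    simp only [disjoint_left, mem_image, mem_range]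
    rintro p ⟨b1, hb1, rfl⟩ ⟨b2, hb2, heq⟩
    exact hxy (congrArg Prod.fst heq).symm

/-- Counting monomials `x0^i x1^j x2^p x3^q` of total degree m - 2 with weight
`(i-j)·a1 + (p-q)·a2` strictly between 0 and 2 * a1. -/
theorem stmt_6 (m : ℕ) (hm : Odd m) (hm3 : 3 ≤ m) (a1 a2 : ℤ)
    (h1 : Odd a1) (h2 : Odd a2) (ha2 : 0 < a2) (ha : (m : ℤ) * a2 < a1) :
    Set.ncard {v : ℕ × ℕ × ℕ × ℕ |
        v.1 + v.2.1 + v.2.2.1 + v.2.2.2 = m - 2 ∧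
        (0 : ℤ) < (v.1 : ℤ) * a1 - (v.2.1 : ℤ) * a1 + (v.2.2.1 : ℤ) * a2 - (v.2.2.2 : ℤ) * a2 ∧
        (v.1 : ℤ) * a1 - (v.2.1 : ℤ) * a1 + (v.2.2.1 : ℤ) * a2 - (v.2.2.2 : ℤ) * a2 < 2 * a1}
      = (m - 1) ^ 2 / 2 := by
  classical
  obtain ⟨k, rfl⟩ : ∃ k, m = 2*k+3 := by
    obtain ⟨r, hr⟩ := hm; exact ⟨(m-3)/2, by omega⟩
  push_cast at ha
  have ha1 : (0:ℤ) < a1 := by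
    nlinarith [mul_pos (show (0:ℤ) < 2*(k:ℤ)+3 by positivity) ha2]
  -- key arithmetic characterization
  have key : ∀ i j p q : ℕ, i + j + p + q = 2*k+1 →
      (((0:ℤ) < (i:ℤ)*a1 - (j:ℤ)*a1 + (p:ℤ)*a2 - (q:ℤ)*a2 ∧
        (i:ℤ)*a1 - (j:ℤ)*a1 + (p:ℤ)*a2 - (q:ℤ)*a2 < 2*a1) ↔
       ((i = j ∧ q < p) ∨ i = j + 1 ∨ (i = j + 2 ∧ p < q))) := by
    intro i j p q hsum
    have hb1 : (p:ℤ)*a2 - (q:ℤ)*a2 ≤ (2*(k:ℤ)+1)*a2 := by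
      have h' : (p:ℤ) - q ≤ 2*(k:ℤ)+1 := by push_cast; omega
      nlinarith
    have hb2 : -((2*(k:ℤ)+1)*a2) ≤ (p:ℤ)*a2 - (q:ℤ)*a2 := by
      have h' : -(2*(k:ℤ)+1) ≤ (p:ℤ) - q := by push_cast; omega
      nlinarith
    constructor
    · rintro ⟨hlo, hhi⟩
      rcases lt_or_ge i j with hij | hij
      · exfalso
        have hd : (i:ℤ) - j ≤ -1 := by push_cast; omega
        nlinarith [mul_le_mul_of_nonneg_right hd ha1.le]
      · rcases Nat.lt_or_ge i (j+3) with hij3 | hij3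
        · have hcase : i = j ∨ i = j + 1 ∨ i = j + 2 := by omega
          rcases hcase with rfl | rfl | rfl
          · left
            refine ⟨rfl, ?_⟩
            by_contra hqp
            have hd : (p:ℤ) - q ≤ 0 := by push_cast; omega
            push_cast at hlo
            nlinarith [mul_le_mul_of_nonneg_right hd ha2.le]
          · right; left; rfl
          · right; right
            refine ⟨rfl, ?_⟩
            by_contra hpq
            have hd : (0:ℤ) ≤ (p:ℤ) - q := by push_cast; omega
            push_cast at hhi
            nlinarith [mul_le_mul_of_nonneg_right hd ha2.le]
        · exfalso
          have hd : (3:ℤ) ≤ (i:ℤ) - j := by push_cast; omega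
          nlinarith [mul_le_mul_of_nonneg_right hd ha1.le]
    · rintro (⟨rfl, hqp⟩ | rfl | ⟨rfl, hpq⟩)
      · have hd : (1:ℤ) ≤ (p:ℤ) - q := by push_cast; omega
        constructor
        · push_cast
          nlinarith [mul_le_mul_of_nonneg_right hd ha2.le]
        · push_cast
          nlinarith
      · constructor
        · push_cast; nlinarith
        · push_cast; nlinarith
      · have hd : (p:ℤ) - q ≤ -1 := by push_cast; omega
        constructor
        · push_cast; nlinarith
        · push_cast
          nlinarith [mul_le_mul_of_nonneg_right hd ha2.le]
  -- the finset
  set F : Finset (ℕ × ℕ × ℕ × ℕ) :=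
    (range (2*k+2) ×ˢ range (2*k+2) ×ˢ range (2*k+2) ×ˢ range (2*k+2)).filter
      (fun v => v.1 + v.2.1 + v.2.2.1 + v.2.2.2 = 2*k+1 ∧
        ((v.1 = v.2.1 ∧ v.2.2.2 < v.2.2.1) ∨ v.1 = v.2.1 + 1 ∨
          (v.1 = v.2.1 + 2 ∧ v.2.2.1 < v.2.2.2))) with hF
  have hSF : {v : ℕ × ℕ × ℕ × ℕ |
        v.1 + v.2.1 + v.2.2.1 + v.2.2.2 = 2*k+3 - 2 ∧
        (0 : ℤ) < (v.1 : ℤ) * a1 - (v.2.1 : ℤ) * a1 + (v.2.2.1 : ℤ) * a2 - (v.2.2.2 : ℤ) * a2 ∧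
        (v.1 : ℤ) * a1 - (v.2.1 : ℤ) * a1 + (v.2.2.1 : ℤ) * a2 - (v.2.2.2 : ℤ) * a2 < 2 * a1}
      = ↑F := by
    ext ⟨i, j, p, q⟩
    simp only [Set.mem_setOf_eq, hF, coe_filter, mem_product, mem_range, Set.mem_setOf_eq]
    constructor
    · rintro ⟨hs, hw⟩
      have hs' : i + j + p + q = 2*k+1 := by omega
      exact ⟨⟨by omega, by omega, by omega, by omega⟩, hs', (key i j p q hs').mp hw⟩
    · rintro ⟨_, hs, hc⟩
      exact ⟨by omega, (key i j p q hs).mpr hc⟩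
  rw [hSF, Set.ncard_coe_finset]
  -- split F into three parts
  have hsplit : F.card = (F.filter (fun v => v.1 = v.2.1)).card
      + (F.filter (fun v => v.1 = v.2.1 + 1)).card
      + (F.filter (fun v => v.1 = v.2.1 + 2)).card := by
    rw [← card_union_of_disjoint, ← card_union_of_disjoint]
    · congr 1
      ext ⟨i, j, p, q⟩
      simp only [mem_union, mem_filter, hF, mem_product, mem_range]
      omega
    · simp only [disjoint_left, mem_union, mem_filter]
      rintro v (⟨_, h⟩ | ⟨_, h⟩) ⟨_, h'⟩ <;> omega
    · simp only [disjoint_left, mem_filter]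
      rintro v ⟨_, h⟩ ⟨_, h'⟩; omega
  -- part A
  have hAcard : (F.filter (fun v => v.1 = v.2.1)).card = ∑ a ∈ range (k+1), (k+1-a) := by
    rw [← cardlem (k+1) (k+1) (fun a => k+1-a) (fun a _ => by show k+1-a ≤ k+1; omega)]
    apply card_nbij' (i := fun v => (v.1, v.2.2.2))
      (j := fun x => (x.1, x.1, 2*k+1-2*x.1-x.2, x.2))
    · rintro ⟨i, j, p, q⟩ hv
      simp only [mem_coe, mem_filter, hF, mem_product, mem_range, true_and, and_true, true_or, or_true] at hv ⊢
      try dsimp only at hv ⊢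
      omega
    · rintro ⟨a, b⟩ hx
      simp only [mem_coe, mem_filter, hF, mem_product, mem_range, true_and, and_true, true_or, or_true] at hx ⊢
      try dsimp only at hx ⊢
      omega
    · rintro ⟨i, j, p, q⟩ hv
      simp only [mem_coe, mem_filter, hF, mem_product, mem_range, true_and, and_true, true_or, or_true] at hv
      try dsimp only at hv
      simp only [Prod.mk.injEq, true_and, and_true, true_or, or_true]
      omega
    · rintro ⟨a, b⟩ _; rfl
  -- part B
  have hBcard : (F.filter (fun v => v.1 = v.2.1 + 1)).card
      = ∑ a ∈ range (k+1), (2*k+1-2*a) := by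
    rw [← cardlem (k+1) (2*k+1) (fun a => 2*k+1-2*a) (fun a _ => by show 2*k+1-2*a ≤ 2*k+1; omega)]
    apply card_nbij' (i := fun v => (v.2.1, v.2.2.2))
      (j := fun x => (x.1+1, x.1, 2*k-2*x.1-x.2, x.2))
    · rintro ⟨i, j, p, q⟩ hv
      simp only [mem_coe, mem_filter, hF, mem_product, mem_range, true_and, and_true, true_or, or_true] at hv ⊢
      try dsimp only at hv ⊢
      omega
    · rintro ⟨a, b⟩ hx
      simp only [mem_coe, mem_filter, hF, mem_product, mem_range, true_and, and_true, true_or, or_true] at hx ⊢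
      try dsimp only at hx ⊢
      omega
    · rintro ⟨i, j, p, q⟩ hv
      simp only [mem_coe, mem_filter, hF, mem_product, mem_range, true_and, and_true, true_or, or_true] at hv
      try dsimp only at hv
      simp only [Prod.mk.injEq, true_and, and_true, true_or, or_true]
      omega
    · rintro ⟨a, b⟩ _; rfl
  -- part C
  have hCcard : (F.filter (fun v => v.1 = v.2.1 + 2)).card = ∑ a ∈ range k, (k-a) := by
    rw [← cardlem k k (fun a => k-a) (fun a _ => by show k-a ≤ k; omega)]
    apply card_nbij' (i := fun v => (v.2.1, v.2.2.1))
      (j := fun x => (x.1+2, x.1, x.2, 2*k-1-2*x.1-x.2))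
    · rintro ⟨i, j, p, q⟩ hv
      simp only [mem_coe, mem_filter, hF, mem_product, mem_range, true_and, and_true, true_or, or_true] at hv ⊢
      try dsimp only at hv ⊢
      omega
    · rintro ⟨a, b⟩ hx
      simp only [mem_coe, mem_filter, hF, mem_product, mem_range, true_and, and_true, true_or, or_true] at hx ⊢
      try dsimp only at hx ⊢
      omega
    · rintro ⟨i, j, p, q⟩ hv
      simp only [mem_coe, mem_filter, hF, mem_product, mem_range, true_and, and_true, true_or, or_true] at hv
      try dsimp only at hv
      simp only [Prod.mk.injEq, true_and, and_true, true_or, or_true]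
      omega
    · rintro ⟨a, b⟩ _; rfl
  rw [hsplit, hAcard, hBcard, hCcard]
  -- sum computation
  have hA : ∑ a ∈ range (k+1), (k+1-a) = ∑ a ∈ range (k+1), (a+1) := by
    rw [← sum_range_reflect (fun a => a + 1) (k+1)]
    exact sum_congr rfl (fun a ha' => by rw [mem_range] at ha'; omega)
  have hB : ∑ a ∈ range (k+1), (2*k+1-2*a) = (k+1)^2 := by
    rw [← sum_odds_aux (k+1), ← sum_range_reflect (fun a => 2*a + 1) (k+1)]
    exact sum_congr rfl (fun a ha' => by rw [mem_range] at ha'; omega)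
  have hC : ∑ a ∈ range k, (k-a) = ∑ a ∈ range k, (a+1) := by
    rw [← sum_range_reflect (fun a => a + 1) k]
    exact sum_congr rfl (fun a ha' => by rw [mem_range] at ha'; omega)
  rw [hA, hB, hC]
  have e1 : ∑ a ∈ range (k+1), (a+1) = (∑ a ∈ range (k+1), a) + (k+1) := by
    rw [sum_add_distrib]; simp
  have e2 : ∑ a ∈ range k, (a+1) = (∑ a ∈ range k, a) + k := by
    rw [sum_add_distrib]; simp
  rw [e1, e2]
  have g1 : (∑ a ∈ range (k+1), a) * 2 = k*k + k := by
    rw [sum_range_id_mul_two (k+1)]; simp [Nat.add_sub_cancel]; ring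
  have g2 : (∑ a ∈ range k, a) * 2 + k = k*k := by
    rw [sum_range_id_mul_two k]
    cases k with
    | zero => rfl
    | succ n => simp [Nat.succ_sub_one]; ring
  have h4 : (k+1)^2 = k*k + 2*k + 1 := by ring
  have h5 : (2*k+3-1)^2 = 4*(k*k) + 8*k + 4 := by
    rw [show 2*k+3-1 = 2*k+2 from rfl]; ring
  rw [h4]
  set s1 := ∑ a ∈ range (k+1), a with hs1
  set s2 := ∑ a ∈ range k, a with hs2
  have htot : (s1 + (k+1) + (k*k + 2*k + 1) + (s2 + k)) * 2 = (2*k+3-1)^2 := by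
    rw [h5]
    set kk := k*k with hkk
    omega
  omega
end

section
/- The number of monomials of degree m-3 in x0,x1,x2,x3 (m odd, m ≥ 3) with weight strictly between 0 and a1 equals (m-1)(m-3)/4, where weights are a1, -a1, a2, -a2 and a1 > m·a2 > 0 are odd integers. -/
private lemma tri_mem (n : ℕ) (p : ℕ × ℕ) :
    p ∈ (Finset.range n).biUnion (fun s => Finset.HasAntidiagonal.antidiagonal s) ↔ p.1 + p.2 < n := by
  simp only [Finset.mem_biUnion, Finset.mem_range, Finset.HasAntidiagonal.mem_antidiagonal]
  exact ⟨fun ⟨s, hs, h⟩ => by omega, fun h => ⟨p.1 + p.2, h, rfl⟩⟩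

private lemma tri_card (n : ℕ) :
    ((Finset.range n).biUnion (fun s => Finset.HasAntidiagonal.antidiagonal s)).card * 2 = n * (n + 1) := by
  rw [Finset.card_biUnion (by
    intro x _ y _ hxy
    rw [Function.onFun, Finset.disjoint_left]
    intro p hp hp'
    rw [Finset.HasAntidiagonal.mem_antidiagonal] at hp hp'
    omega)]
  induction n with
  | zero => simp
  | succ k ih =>
    rw [Finset.sum_range_succ, Finset.Nat.card_antidiagonal]
    have h : k * (k + 1) + (k + 1 + 1) * 2 = (k + 1) * (k + 1 + 1) + 1 * 2 := by ring
    linarith [ih]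

set_option maxHeartbeats 1000000 in
/-- Counting monomials `x0^i x1^j x2^p x3^q` of total degree m - 3 with weight
`(i-j)·a1 + (p-q)·a2` strictly between 0 and a1. -/
theorem stmt_8 (m : ℕ) (hm : Odd m) (hm3 : 3 ≤ m) (a1 a2 : ℤ)
    (h1 : Odd a1) (h2 : Odd a2) (ha2 : 0 < a2) (ha : (m : ℤ) * a2 < a1) :
    Set.ncard {v : ℕ × ℕ × ℕ × ℕ |
        v.1 + v.2.1 + v.2.2.1 + v.2.2.2 = m - 3 ∧
        (0 : ℤ) < (v.1 : ℤ) * a1 - (v.2.1 : ℤ) * a1 + (v.2.2.1 : ℤ) * a2 - (v.2.2.2 : ℤ) * a2 ∧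
        (v.1 : ℤ) * a1 - (v.2.1 : ℤ) * a1 + (v.2.2.1 : ℤ) * a2 - (v.2.2.2 : ℤ) * a2 < a1}
      = (m - 1) * (m - 3) / 4 := by
  classical
  obtain ⟨n, rfl⟩ : ∃ n, m = 2 * n + 3 := by
    obtain ⟨k, hk⟩ := hm; exact ⟨k - 1, by omega⟩
  have ha1 : 0 < a1 := lt_trans (by positivity) ha
  have ha' : (2 * (n : ℤ) + 3) * a2 < a1 := by push_cast at ha ⊢; linarith
  set T : Finset (ℕ × ℕ) := (Finset.range n).biUnion (fun s => Finset.HasAntidiagonal.antidiagonal s) with hT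
  set g : Bool × ℕ × ℕ → ℕ × ℕ × ℕ × ℕ := fun x =>
    if x.1 then (x.2.1, x.2.1, 2 * n - 2 * x.2.1 - x.2.2, x.2.2)
    else (x.2.1 + 1, x.2.1, x.2.2, 2 * n - 1 - 2 * x.2.1 - x.2.2) with hg
  have hset : {v : ℕ × ℕ × ℕ × ℕ |
        v.1 + v.2.1 + v.2.2.1 + v.2.2.2 = 2 * n + 3 - 3 ∧
        (0 : ℤ) < (v.1 : ℤ) * a1 - (v.2.1 : ℤ) * a1 + (v.2.2.1 : ℤ) * a2 - (v.2.2.2 : ℤ) * a2 ∧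
        (v.1 : ℤ) * a1 - (v.2.1 : ℤ) * a1 + (v.2.2.1 : ℤ) * a2 - (v.2.2.2 : ℤ) * a2 < a1}
      = ↑((Finset.univ ×ˢ T).image g) := by
    ext ⟨i, j, p, q⟩
    simp only [Set.mem_setOf_eq, Finset.coe_image, Set.mem_image, Finset.mem_coe,
      Finset.mem_product, Finset.mem_univ, true_and]
    constructor
    · rintro ⟨hsum, hw1, hw2⟩
      have hsum' : i + j + p + q = 2 * n := by omega
      have hpq1 : ((p : ℤ) - q) ≤ 2 * (n : ℤ) := by omega
      have hpq2 : -(2 * (n : ℤ)) ≤ (p : ℤ) - q := by omega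
      have hA : ((p : ℤ) - q) * a2 < a1 := by
        have := mul_le_mul_of_nonneg_right hpq1 ha2.le
        nlinarith
      have hB : -a1 < ((p : ℤ) - q) * a2 := by
        have := mul_le_mul_of_nonneg_right hpq2 ha2.le
        nlinarith
      have hij : i = j ∨ i = j + 1 := by
        by_contra h
        have hd : (i : ℤ) - j ≤ -1 ∨ 2 ≤ (i : ℤ) - j := by omega
        rcases hd with hd | hd
        · have := mul_le_mul_of_nonneg_right hd ha1.le
          nlinarith
        · have := mul_le_mul_of_nonneg_right hd ha1.le
          nlinarith
      rcases hij with rfl | rfl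
      · -- i = j case: weight = (p - q) * a2 > 0, so p > q
        have hw : (0 : ℤ) < ((p : ℤ) - q) * a2 := by nlinarith
        have hqp : q < p := by
          by_contra hle
          push_neg at hle
          have h0 : ((p : ℤ) - q) ≤ 0 := by omega
          nlinarith
        refine ⟨(true, i, q), (tri_mem n (i, q)).mpr (by omega), ?_⟩
        simp only [hg, if_true]
        refine Prod.ext rfl (Prod.ext rfl (Prod.ext ?_ rfl))
        simp only
        omega
      · -- i = j + 1 case: weight = a1 + (p - q) * a2 < a1, so p < q
        have hw : ((p : ℤ) - q) * a2 < 0 := by push_cast at hw2; nlinarith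
        have hqp : p < q := by
          by_contra hle
          push_neg at hle
          have h0 : (0 : ℤ) ≤ (p : ℤ) - q := by omega
          nlinarith [mul_nonneg h0 ha2.le]
        refine ⟨(false, j, p), (tri_mem n (j, p)).mpr (by omega), ?_⟩
        simp only [hg, if_false, Bool.false_eq_true]
        refine Prod.ext ?_ (Prod.ext rfl (Prod.ext rfl ?_)) <;> simp only <;> omega
    · rintro ⟨⟨b, x, y⟩, hmem, hgeq⟩
      rw [tri_mem] at hmem
      simp only at hmem
      cases b
      · simp only [hg, if_false, Bool.false_eq_true, Prod.mk.injEq] at hgeq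
        obtain ⟨e1, e2, e3, e4⟩ := hgeq
        subst e1; subst e2; subst e3; subst e4
        refine ⟨by omega, ?_, ?_⟩
        · have h1' : ((2 * n - 1 - 2 * x - y : ℕ) : ℤ) - y ≤ 2 * (n : ℤ) := by omega
          have := mul_le_mul_of_nonneg_right h1' ha2.le
          push_cast at this ⊢
          nlinarith
        · have h1' : (0 : ℤ) < ((2 * n - 1 - 2 * x - y : ℕ) : ℤ) - y := by omega
          have := mul_pos h1' ha2
          push_cast at this ⊢
          nlinarith
      · simp only [hg, if_true, Prod.mk.injEq] at hgeq
        obtain ⟨e1, e2, e3, e4⟩ := hgeq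
        subst e1; subst e2; subst e3; subst e4
        refine ⟨by omega, ?_, ?_⟩
        · have h1' : (0 : ℤ) < ((2 * n - 2 * x - y : ℕ) : ℤ) - y := by omega
          have := mul_pos h1' ha2
          push_cast at this ⊢
          nlinarith
        · have h1' : ((2 * n - 2 * x - y : ℕ) : ℤ) - y ≤ 2 * (n : ℤ) := by omega
          have := mul_le_mul_of_nonneg_right h1' ha2.le
          push_cast at this ⊢
          nlinarith
  rw [hset, Set.ncard_coe_finset]
  have hinj : Function.Injective g := by
    rintro ⟨b, x, y⟩ ⟨b', x', y'⟩ h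
    simp only [hg] at h
    cases b <;> cases b' <;>
        simp only [if_true, if_false, Bool.false_eq_true, Prod.mk.injEq] at h <;>
        obtain ⟨e1, e2, e3, e4⟩ := h
    · simp only [Prod.mk.injEq]; exact ⟨trivial, by omega, by omega⟩
    · exact absurd e2 (by omega)
    · exact absurd e2 (by omega)
    · simp only [Prod.mk.injEq]; exact ⟨trivial, by omega, by omega⟩
  rw [Finset.card_image_of_injective _ hinj, Finset.card_product, Finset.card_univ, Fintype.card_bool]
  have htri := tri_card n
  have e1 : 2 * n + 3 - 1 = 2 * (n + 1) := by omega
  have e2 : 2 * n + 3 - 3 = 2 * n := by omega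
  rw [e1, e2]
  have e3 : 2 * (n + 1) * (2 * n) = n * (n + 1) * 4 := by ring
  rw [e3, Nat.mul_div_cancel _ (by norm_num)]
  linarith
end

section
/- Let k be a field and I = (X0X2, X0X1, X0^2, q) ⊂ k[X0,X1,X2,X3] with q = A·X1^2 + B·X1X2 + C·X2^2 where A, B, C are linear forms in X1,X2,X3 not all zero (and A,B,C involve only X1,X2,X3, with B,C only X2,X3). Then the annihilator of the class of q in k[X0,...,X3]/(X0X2, X0X1, X0^2) equals the principal ideal (X0). -/
open MvPolynomial

lemma aux_q_ne_zero (k : Type) [Field k] (a1 a2 a3 b2 b3 c2 c3 : k)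
    (A B Cf q : MvPolynomial (Fin 4) k)
    (hA : A = C a1 * X 1 + C a2 * X 2 + C a3 * X 3)
    (hB : B = C b2 * X 2 + C b3 * X 3)
    (hC : Cf = C c2 * X 2 + C c3 * X 3)
    (hq : q = A * X 1 ^ 2 + B * X 1 * X 2 + Cf * X 2 ^ 2)
    (h0 : q = 0) :
    a1 = 0 ∧ a2 = 0 ∧ a3 = 0 ∧ b2 = 0 ∧ b3 = 0 ∧ c2 = 0 ∧ c3 = 0 := by
  let ψ : MvPolynomial (Fin 4) k →ₐ[k] Polynomial k :=
    aeval (fun i : Fin 4 => if i = 1 then (Polynomial.X : Polynomial k)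
      else if i = 2 then Polynomial.X ^ 10 else if i = 3 then Polynomial.X ^ 100 else 0)
  have key : (Polynomial.C a1 * Polynomial.X ^ 3 + Polynomial.C a2 * Polynomial.X ^ 12
      + Polynomial.C a3 * Polynomial.X ^ 102 + Polynomial.C b2 * Polynomial.X ^ 21
      + Polynomial.C b3 * Polynomial.X ^ 111 + Polynomial.C c2 * Polynomial.X ^ 30
      + Polynomial.C c3 * Polynomial.X ^ 120 : Polynomial k) = 0 := by
    have := congrArg ψ h0
    rw [hq, hA, hB, hC] at this
    simp only [ψ, map_add, map_mul, map_pow, aeval_X, aeval_C, map_zero,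
      show ((2:Fin 4) = 1) ↔ False by decide,
      show ((3:Fin 4) = 1) ↔ False by decide,
      show ((3:Fin 4) = 2) ↔ False by decide, Polynomial.algebraMap_eq,
      if_false, if_true, eq_self_iff_true] at this
    rw [← this]
    ring
  refine ⟨?_, ?_, ?_, ?_, ?_, ?_, ?_⟩ <;>
  · first
    | (have := congrArg (fun p => Polynomial.coeff p 3) key; simpa using this)
    | (have := congrArg (fun p => Polynomial.coeff p 12) key; simpa using this)
    | (have := congrArg (fun p => Polynomial.coeff p 102) key; simpa using this)
    | (have := congrArg (fun p => Polynomial.coeff p 21) key; simpa using this)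
    | (have := congrArg (fun p => Polynomial.coeff p 111) key; simpa using this)
    | (have := congrArg (fun p => Polynomial.coeff p 30) key; simpa using this)
    | (have := congrArg (fun p => Polynomial.coeff p 120) key; simpa using this)

/-- Let `k` be a field and `q = A·X1² + B·X1·X2 + C·X2²` in `k[X0,X1,X2,X3]`, where
`A = a1·X1 + a2·X2 + a3·X3`, `B = b2·X2 + b3·X3`, `C = c2·X2 + c3·X3` are linear forms,
not all zero.  Then the annihilator of the class of `q` in
`k[X0,...,X3]/(X0·X2, X0·X1, X0²)` is the principal ideal `(X0)`: a polynomial `P`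
satisfies `P·q ∈ (X0·X2, X0·X1, X0²)` if and only if `P ∈ (X0)`. -/
theorem stmt_15 (k : Type) [Field k] (a1 a2 a3 b2 b3 c2 c3 : k)
    (hne : ¬(a1 = 0 ∧ a2 = 0 ∧ a3 = 0 ∧ b2 = 0 ∧ b3 = 0 ∧ c2 = 0 ∧ c3 = 0))
    (A B Cf q : MvPolynomial (Fin 4) k)
    (hA : A = C a1 * X 1 + C a2 * X 2 + C a3 * X 3)
    (hB : B = C b2 * X 2 + C b3 * X 3)
    (hC : Cf = C c2 * X 2 + C c3 * X 3)
    (hq : q = A * X 1 ^ 2 + B * X 1 * X 2 + Cf * X 2 ^ 2) :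
    ∀ P : MvPolynomial (Fin 4) k,
      P * q ∈ Ideal.span {X 0 * X 2, X 0 * X 1, (X 0 : MvPolynomial (Fin 4) k) ^ 2} ↔
        P ∈ Ideal.span {(X 0 : MvPolynomial (Fin 4) k)} := by
  have hq0 : q ≠ 0 := fun h =>
    hne (aux_q_ne_zero k a1 a2 a3 b2 b3 c2 c3 A B Cf q hA hB hC hq h)
  -- kill-X0 substitution
  let φ : MvPolynomial (Fin 4) k →ₐ[k] MvPolynomial (Fin 4) k :=
    aeval (fun i : Fin 4 => if i = 0 then 0 else X i)
  have hφq : φ q = q := by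
    rw [hq, hA, hB, hC]
    simp only [φ, map_add, map_mul, map_pow, aeval_X, aeval_C,
      show ((1:Fin 4) = 0) ↔ False by decide,
      show ((2:Fin 4) = 0) ↔ False by decide,
      show ((3:Fin 4) = 0) ↔ False by decide,
      if_false, algebraMap_eq]
  intro P
  constructor
  · intro hmem
    rw [Ideal.mem_span_singleton]
    have h1 : Ideal.span {X 0 * X 2, X 0 * X 1, (X 0 : MvPolynomial (Fin 4) k) ^ 2}
        ≤ Ideal.span {(X 0 : MvPolynomial (Fin 4) k)} := by
      rw [Ideal.span_le]
      intro x hx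
      simp only [Set.mem_insert_iff, Set.mem_singleton_iff] at hx
      rcases hx with h | h | h <;> subst h
      · exact Ideal.mem_span_singleton.2 ⟨X 2, rfl⟩
      · exact Ideal.mem_span_singleton.2 ⟨X 1, rfl⟩
      · exact Ideal.mem_span_singleton.2 ⟨X 0, by ring⟩
    have hdvd : (X 0 : MvPolynomial (Fin 4) k) ∣ P * q :=
      Ideal.mem_span_singleton.1 (h1 hmem)
    have hprime : Prime (X 0 : MvPolynomial (Fin 4) k) := by
      rw [← MulEquiv.prime_iff (finSuccEquiv k 3).toMulEquiv]
      simpa [finSuccEquiv_X_zero] using Polynomial.prime_X (R := MvPolynomial (Fin 3) k)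
    rcases hprime.2.2 _ _ hdvd with h | h
    · exact h
    · exfalso
      obtain ⟨r, hr⟩ := h
      apply hq0
      have := congrArg φ hr
      rw [hφq, map_mul] at this
      have hX0 : φ (X 0) = 0 := by
        simp [φ]
      rw [hX0, zero_mul] at this
      exact this
  · intro hP
    obtain ⟨R, hR⟩ := Ideal.mem_span_singleton.1 hP
    have hmem : (X 0 * q : MvPolynomial (Fin 4) k)
        ∈ Ideal.span {X 0 * X 2, X 0 * X 1, (X 0 : MvPolynomial (Fin 4) k) ^ 2} := by
      have heq : (X 0 : MvPolynomial (Fin 4) k) * q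
          = (A * X 1) * (X 0 * X 1) + (B * X 1 + Cf * X 2) * (X 0 * X 2) := by
        rw [hq]; ring
      rw [heq]
      exact Ideal.add_mem _
        (Ideal.mul_mem_left _ _ (Ideal.subset_span (by simp)))
        (Ideal.mul_mem_left _ _ (Ideal.subset_span (by simp)))
    have heq2 : P * q = R * (X 0 * q) := by rw [hR]; ring
    rw [heq2]
    exact Ideal.mul_mem_left _ _ hmem
end
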